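/- Let Ψ : ℝ^{N-1} → ℝ be L-Lipschitz, U bounded harmonic on E_Ψ satisfying the vertical Hölder condition |U(x', x_N) − U(x', y_N)| ≤ C|x_N − y_N|^α with α ∈ (0,1), and suppose the mixed second derivative bound |∂²U/∂x_N∂ℓ (x)| ≤ M·dist(x, ∂E_Ψ)^{α−2} holds for a unit vector ℓ and all x ∈ E_Ψ. Then for all x ∈ E_Ψ and λ > 0, |∂U/∂ℓ(x + λe_N) − ∂U/∂ℓ(x)| ≤ (M/((1−α)(cos γ)^{2−α}))·(dist(x, ∂E_Ψ)^{α−1} − (dist(x, ∂E_Ψ) + λ)^{α−1}), where γ = arctan L. -/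

import Mathlib

/-!
A Lipschitz graph satisfies a cone condition: every point `w` outside `E_Ψ` is at distance at
least `cos γ · (z_N - Ψ(z'))` from `z ∈ E_Ψ`, while the vertical projection onto the graph is at
distance exactly `z_N - Ψ(z')`. Hence the distance to `∂E_Ψ` grows along the ray `x + t e_N` at
least like `cos γ · (d(x) + t)`, so the mixed-derivative bound gives
`|d/dt ∂U/∂ℓ(x + t e_N)| ≤ M cos^{α-2} γ (d(x) + t)^{α-2}`, and integrating over `[0, λ]` yields
the estimate.
-/

open Metric Set MeasureTheory Filter

noncomputable section

/-- `Euc n` is Euclidean space `ℝ^n`. -/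
abbrev Euc (n : ℕ) := EuclideanSpace ℝ (Fin n)

/-- A function is harmonic on a set if it is `C²` there and its Laplacian vanishes. -/
def HarmonicOnSet {m : ℕ} (f : Euc m → ℝ) (s : Set (Euc m)) : Prop :=
  ContDiffOn ℝ 2 f s ∧ ∀ x ∈ s,
    ∑ i : Fin m, fderiv ℝ (fun y => fderiv ℝ f y (EuclideanSpace.single i 1)) x
      (EuclideanSpace.single i 1) = 0

/-- The constant `K_N = 2 m_{N-1}(B^{N-1}) / m_N(B^N)` (here `N = n+1`). -/
def Kconst (n : ℕ) : ℝ :=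
  2 * (volume (ball (0 : Euc n) 1)).toReal / (volume (ball (0 : Euc (n+1)) 1)).toReal

/-- the projection of `ℝ^{n+1}` onto the first `n` coordinates -/
def proj {n : ℕ} (x : Euc (n+1)) : Euc n := WithLp.toLp 2 (fun (i : Fin n) => x i.castSucc)

/-- the last standard basis vector `e_N` in `ℝ^{n+1}` -/
def eN (n : ℕ) : Euc (n+1) := EuclideanSpace.single (Fin.last n) 1

/-- the strict epigraph of `Ψ : ℝ^n → ℝ` -/
def epigraph {n : ℕ} (Ψ : Euc n → ℝ) : Set (Euc (n+1)) :=
  {x | Ψ (proj x) < x (Fin.last n)}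

/-- the point obtained from `x` by replacing its last coordinate with `t` -/
def vmove {n : ℕ} (x : Euc (n+1)) (t : ℝ) : Euc (n+1) :=
  x + (t - x (Fin.last n)) • eN n

/-- the vertical Hölder condition of order `α` with constant `C` -/
def VertHolder {n : ℕ} (Ψ : Euc n → ℝ) (U : Euc (n+1) → ℝ) (C α : ℝ) : Prop :=
  ∀ x ∈ epigraph Ψ, ∀ t : ℝ, Ψ (proj x) < t →
    |U x - U (vmove x t)| ≤ C * |x (Fin.last n) - t| ^ α

open Topology

lemma continuous_of_abs_sub_le_mul_norm {E : Type*} [SeminormedAddCommGroup E] {f : E → ℝ}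
    {L : ℝ} (hf : ∀ x y, |f x - f y| ≤ L * ‖x - y‖) : Continuous f := by
  refine (LipschitzWith.of_dist_le_mul (K := L.toNNReal) fun x y => ?_).continuous
  rw [Real.dist_eq, dist_eq_norm]
  exact (hf x y).trans (by gcongr; exact Real.le_coe_toNNReal L)

section EpigraphGeometry

variable {n : ℕ} {Ψ : Euc n → ℝ}

@[simp]
lemma eN_apply_castSucc (i : Fin n) : eN n i.castSucc = 0 := by
  simp [eN, (Fin.castSucc_lt_last i).ne]

@[simp]
lemma eN_apply_last : eN n (Fin.last n) = 1 := by
  simp [eN]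

lemma norm_eN : ‖eN n‖ = 1 := by
  simp [eN]

@[simp]
lemma proj_add_smul_eN (x : Euc (n+1)) (t : ℝ) : proj (x + t • eN n) = proj x := by
  ext i
  simp [proj]

@[simp]
lemma last_add_smul_eN (x : Euc (n+1)) (t : ℝ) :
    (x + t • eN n) (Fin.last n) = x (Fin.last n) + t := by
  simp

lemma continuous_proj : Continuous (proj (n := n)) :=
  (PiLp.continuous_toLp 2 _).comp (by fun_prop)

lemma isOpen_epigraph (hΨ : Continuous Ψ) : IsOpen (epigraph Ψ) :=
  isOpen_lt (hΨ.comp continuous_proj) (by fun_prop)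

lemma add_smul_eN_mem_epigraph {x : Euc (n+1)} (hx : x ∈ epigraph Ψ) {t : ℝ} (ht : 0 ≤ t) :
    x + t • eN n ∈ epigraph Ψ := by
  change Ψ (proj x) < x (Fin.last n) at hx
  change Ψ (proj (x + t • eN n)) < (x + t • eN n) (Fin.last n)
  simp only [proj_add_smul_eN, last_add_smul_eN]
  linarith

lemma vmove_mem_frontier_epigraph (x : Euc (n+1)) :
    vmove x (Ψ (proj x)) ∈ frontier (epigraph Ψ) := by
  set p := vmove x (Ψ (proj x))
  have hp : proj p = proj x ∧ p (Fin.last n) = Ψ (proj x) := by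
    simp [p, vmove]
  have hp_up : ∀ s : ℝ, 0 < s → p + s • eN n ∈ epigraph Ψ := fun s hs => by
    change Ψ (proj (p + s • eN n)) < (p + s • eN n) (Fin.last n)
    simp only [proj_add_smul_eN, last_add_smul_eN, hp]
    linarith
  refine ⟨?_, fun hint => ?_⟩
  · have hlim : Tendsto (fun s : ℝ => p + s • eN n) (𝓝[>] 0) (𝓝 p) := by
      simpa using ((tendsto_id.smul_const (eN n)).const_add p).mono_left
        (nhdsWithin_le_nhds (a := (0 : ℝ)))
    exact mem_closure_of_tendsto hlim (eventually_nhdsWithin_of_forall hp_up)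
  · have hmem : Ψ (proj p) < p (Fin.last n) := interior_subset (s := epigraph Ψ) hint
    rw [hp.1, hp.2] at hmem
    exact lt_irrefl _ hmem

lemma dist_sq_eq_norm_proj_sub_sq_add_sq (z w : Euc (n+1)) :
    dist z w ^ 2 = ‖proj z - proj w‖ ^ 2 + (z (Fin.last n) - w (Fin.last n)) ^ 2 := by
  rw [EuclideanSpace.dist_eq, Real.sq_sqrt (by positivity), EuclideanSpace.norm_sq_eq,
    Fin.sum_univ_castSucc]
  simp [proj, Real.dist_eq, sq_abs]

lemma cos_arctan_mul_le_dist {L : ℝ} (hΨ : ∀ x y, |Ψ x - Ψ y| ≤ L * ‖x - y‖)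
    {z w : Euc (n+1)} (hz : z ∈ epigraph Ψ) (hw : w ∉ epigraph Ψ) :
    Real.cos (Real.arctan L) * (z (Fin.last n) - Ψ (proj z)) ≤ dist z w := by
  change Ψ (proj z) < z (Fin.last n) at hz
  change ¬ Ψ (proj w) < w (Fin.last n) at hw
  set a := ‖proj z - proj w‖
  set b := z (Fin.last n) - w (Fin.last n)
  set h := z (Fin.last n) - Ψ (proj z)
  have ha : 0 ≤ a := norm_nonneg _
  have hh : 0 < h := sub_pos.2 hz
  have hb : h - L * a ≤ b := by
    have := (abs_le.1 (hΨ (proj w) (proj z))).2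
    rw [norm_sub_rev] at this
    linarith
  have key : h ^ 2 ≤ (1 + L ^ 2) * (a ^ 2 + b ^ 2) := by
    rcases le_or_gt h (L * a) with hLa | hLa
    · nlinarith [mul_self_le_mul_self hh.le hLa]
    · have hb2 : (h - L * a) ^ 2 ≤ b ^ 2 := pow_le_pow_left₀ (by linarith) hb 2
      -- `(1 + L²)(a² + (h - L a)²) - h² = ((1 + L²) a - L h)²`
      nlinarith [sq_nonneg ((1 + L ^ 2) * a - L * h)]
  have hc := Real.cos_arctan_pos L
  refine (pow_le_pow_iff_left₀ (by positivity) dist_nonneg two_ne_zero).1 ?_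
  rw [dist_sq_eq_norm_proj_sub_sq_add_sq, mul_pow, Real.cos_sq_arctan, div_mul_eq_mul_div,
    one_mul, div_le_iff₀ (by positivity)]
  linarith

lemma infDist_frontier_epigraph_le {z : Euc (n+1)} (hz : z ∈ epigraph Ψ) :
    infDist z (frontier (epigraph Ψ)) ≤ z (Fin.last n) - Ψ (proj z) := by
  change Ψ (proj z) < z (Fin.last n) at hz
  refine (infDist_le_dist_of_mem (vmove_mem_frontier_epigraph z)).trans_eq ?_
  rw [vmove, dist_self_add_right, norm_smul, norm_eN, mul_one, Real.norm_eq_abs,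
    abs_of_neg (by linarith)]
  ring

variable {L : ℝ} (hΨ : ∀ x y, |Ψ x - Ψ y| ≤ L * ‖x - y‖)
include hΨ

lemma cos_arctan_mul_le_infDist {z : Euc (n+1)} (hz : z ∈ epigraph Ψ) :
    Real.cos (Real.arctan L) * (z (Fin.last n) - Ψ (proj z)) ≤
      infDist z (frontier (epigraph Ψ)) := by
  refine (le_infDist ⟨_, vmove_mem_frontier_epigraph z⟩).2 fun w hw => ?_
  rw [(isOpen_epigraph (continuous_of_abs_sub_le_mul_norm hΨ)).frontier_eq] at hw
  exact cos_arctan_mul_le_dist hΨ hz hw.2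

lemma infDist_frontier_epigraph_pos {z : Euc (n+1)} (hz : z ∈ epigraph Ψ) :
    0 < infDist z (frontier (epigraph Ψ)) :=
  (mul_pos (Real.cos_arctan_pos L) (sub_pos.2 hz)).trans_le (cos_arctan_mul_le_infDist hΨ hz)

lemma cos_arctan_mul_infDist_add_le {x : Euc (n+1)} (hx : x ∈ epigraph Ψ) {t : ℝ} (ht : 0 ≤ t) :
    Real.cos (Real.arctan L) * (infDist x (frontier (epigraph Ψ)) + t) ≤
      infDist (x + t • eN n) (frontier (epigraph Ψ)) := by
  have hup := cos_arctan_mul_le_infDist hΨ (add_smul_eN_mem_epigraph hx ht)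
  rw [proj_add_smul_eN, last_add_smul_eN] at hup
  refine le_trans ?_ hup
  gcongr
  linarith [infDist_frontier_epigraph_le hx]

lemma infDist_add_smul_eN_rpow_le {x : Euc (n+1)} (hx : x ∈ epigraph Ψ) {t : ℝ} (ht : 0 ≤ t)
    {p : ℝ} (hp : p ≤ 0) :
    infDist (x + t • eN n) (frontier (epigraph Ψ)) ^ p ≤
      Real.cos (Real.arctan L) ^ p * (infDist x (frontier (epigraph Ψ)) + t) ^ p := by
  have hc := Real.cos_arctan_pos L
  have hd := infDist_frontier_epigraph_pos hΨ hx
  rw [← Real.mul_rpow hc.le (by positivity)]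
  exact Real.rpow_le_rpow_of_nonpos (by positivity) (cos_arctan_mul_infDist_add_le hΨ hx ht) hp

end EpigraphGeometry

lemma hasDerivAt_fderiv_apply_add_smul {E F : Type*} [NormedAddCommGroup E] [NormedSpace ℝ E]
    [NormedAddCommGroup F] [NormedSpace ℝ F] {U : E → F} {s : Set E} (hU : ContDiffOn ℝ 2 U s)
    (hs : IsOpen s) {x v : E} {t : ℝ} (ht : x + t • v ∈ s) (l : E) :
    HasDerivAt (fun t : ℝ => fderiv ℝ U (x + t • v) l)
      (fderiv ℝ (fun y => fderiv ℝ U y l) (x + t • v) v) t := by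
  have hG : DifferentiableAt ℝ (fun y => fderiv ℝ U y l) (x + t • v) :=
    (((hU.contDiffAt (hs.mem_nhds ht)).fderiv_right (m := 1) (by norm_num)).clm_apply
      contDiffAt_const).differentiableAt one_ne_zero
  have hline : HasDerivAt (fun t : ℝ => x + t • v) v t := by
    simpa using ((hasDerivAt_id t).smul_const v).const_add x
  exact hG.hasFDerivAt.comp_hasDerivAt t hline

lemma norm_sub_le_sub_of_norm_deriv_le {E : Type*} [NormedAddCommGroup E] [NormedSpace ℝ E]
    {f f' : ℝ → E} {B B' : ℝ → ℝ} {a b : ℝ} (hab : a ≤ b)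
    (hf : ∀ t ∈ Icc a b, HasDerivAt f (f' t) t) (hB : ∀ t ∈ Icc a b, HasDerivAt B (B' t) t)
    (bound : ∀ t ∈ Ico a b, ‖f' t‖ ≤ B' t) :
    ‖f b - f a‖ ≤ B b - B a := by
  have hf' : ∀ t ∈ Icc a b, HasDerivAt (fun s => f s - f a) (f' t) t :=
    fun t ht => (hf t ht).sub_const _
  have hB' : ∀ t ∈ Icc a b, HasDerivAt (fun s => B s - B a) (B' t) t :=
    fun t ht => (hB t ht).sub_const _
  exact image_norm_le_of_norm_deriv_right_le_deriv_boundary'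
    (fun t ht => (hf' t ht).continuousAt.continuousWithinAt)
    (fun t ht => (hf' t (Ico_subset_Icc_self ht)).hasDerivWithinAt) (by simp)
    (fun t ht => (hB' t ht).continuousAt.continuousWithinAt)
    (fun t ht => (hB' t (Ico_subset_Icc_self ht)).hasDerivWithinAt) bound ⟨hab, le_rfl⟩

lemma hasDerivAt_add_rpow_div {d p t : ℝ} (hp : p ≠ 0) (ht : 0 < d + t) :
    HasDerivAt (fun s => (d + s) ^ p / p) ((d + t) ^ (p - 1)) t := by
  have h := (((hasDerivAt_id' t).const_add d).rpow_const (p := p) (Or.inl ht.ne')).div_const p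
  exact h.congr_deriv (by field_simp)

lemma norm_sub_le_of_norm_deriv_le_mul_rpow {E : Type*} [NormedAddCommGroup E]
    [NormedSpace ℝ E] {f f' : ℝ → E} {K d α b : ℝ} (hd : 0 < d) (hα : α < 1) (hb : 0 ≤ b)
    (hf : ∀ t ∈ Icc 0 b, HasDerivAt f (f' t) t)
    (bound : ∀ t ∈ Ico 0 b, ‖f' t‖ ≤ K * (d + t) ^ (α - 2)) :
    ‖f b - f 0‖ ≤ K / (1 - α) * (d ^ (α - 1) - (d + b) ^ (α - 1)) := by
  have hB : ∀ t ∈ Icc 0 b, HasDerivAt (fun s => K * ((d + s) ^ (α - 1) / (α - 1)))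
      (K * (d + t) ^ (α - 2)) t := fun t ht => by
    have h := (hasDerivAt_add_rpow_div (p := α - 1) (by linarith) (by linarith [ht.1] :
      0 < d + t)).const_mul K
    rwa [sub_sub, one_add_one_eq_two] at h
  refine (norm_sub_le_sub_of_norm_deriv_le hb hf hB bound).trans_eq ?_
  have : α - 1 ≠ 0 := by linarith
  have : 1 - α ≠ 0 := by linarith
  field_simp
  rw [add_zero]
  ring

theorem stmt9_general {n : ℕ} (L M α : ℝ) (hα : α ∈ Ioo (0:ℝ) 1)
    (Ψ : Euc n → ℝ) (hΨ : ∀ x y, |Ψ x - Ψ y| ≤ L * ‖x - y‖)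
    (U : Euc (n+1) → ℝ) (hharm : HarmonicOnSet U (epigraph Ψ))
    (l : Euc (n+1))
    (hmix : ∀ x ∈ epigraph Ψ,
      |fderiv ℝ (fun y => fderiv ℝ U y l) x (eN n)| ≤
        M * infDist x (frontier (epigraph Ψ)) ^ (α - 2)) :
    ∀ x ∈ epigraph Ψ, ∀ lam : ℝ, 0 < lam →
      |fderiv ℝ U (x + lam • eN n) l - fderiv ℝ U x l| ≤
        (M / ((1 - α) * Real.cos (Real.arctan L) ^ (2 - α))) *
          (infDist x (frontier (epigraph Ψ)) ^ (α - 1) -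
            (infDist x (frontier (epigraph Ψ)) + lam) ^ (α - 1)) := by
  intro x hx lam hlam
  have hδ := infDist_frontier_epigraph_pos hΨ hx
  have hM : 0 ≤ M :=
    nonneg_of_mul_nonneg_left ((abs_nonneg _).trans (hmix x hx)) (Real.rpow_pos_of_pos hδ _)
  have hderiv : ∀ t ∈ Icc 0 lam, HasDerivAt (fun t : ℝ => fderiv ℝ U (x + t • eN n) l)
      (fderiv ℝ (fun y => fderiv ℝ U y l) (x + t • eN n) (eN n)) t := fun t ht =>
    hasDerivAt_fderiv_apply_add_smul hharm.1
      (isOpen_epigraph (continuous_of_abs_sub_le_mul_norm hΨ)) (add_smul_eN_mem_epigraph hx ht.1) l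
  have hbound : ∀ t ∈ Ico 0 lam, ‖fderiv ℝ (fun y => fderiv ℝ U y l) (x + t • eN n) (eN n)‖ ≤
      M * Real.cos (Real.arctan L) ^ (α - 2) * (infDist x (frontier (epigraph Ψ)) + t) ^ (α - 2) :=
    fun t ht => by
      rw [Real.norm_eq_abs, mul_assoc]
      exact (hmix _ (add_smul_eN_mem_epigraph hx ht.1)).trans <| mul_le_mul_of_nonneg_left
        (infDist_add_smul_eN_rpow_le hΨ hx ht.1 (by linarith [hα.2])) hM
  have hconst : M * Real.cos (Real.arctan L) ^ (α - 2) / (1 - α) =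
      M / ((1 - α) * Real.cos (Real.arctan L) ^ (2 - α)) := by
    rw [show α - 2 = -(2 - α) by ring, Real.rpow_neg (Real.cos_arctan_pos L).le]
    field_simp
  simpa only [zero_smul, add_zero, Real.norm_eq_abs, hconst] using
    norm_sub_le_of_norm_deriv_le_mul_rpow hδ hα.2 hlam.le hderiv hbound

/-- Integrating the mixed second derivative bound along a vertical segment. -/
theorem stmt9 {n : ℕ} (L C M α : ℝ) (hL : 0 ≤ L) (hα : α ∈ Ioo (0:ℝ) 1)
    (Ψ : Euc n → ℝ) (hΨ : ∀ x y, |Ψ x - Ψ y| ≤ L * ‖x - y‖)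
    (U : Euc (n+1) → ℝ) (hharm : HarmonicOnSet U (epigraph Ψ))
    (hbdd : BddAbove ((fun y => |U y|) '' epigraph Ψ))
    (hvert : VertHolder Ψ U C α)
    (l : Euc (n+1)) (hl : ‖l‖ = 1)
    (hmix : ∀ x ∈ epigraph Ψ,
      |fderiv ℝ (fun y => fderiv ℝ U y l) x (eN n)| ≤
        M * infDist x (frontier (epigraph Ψ)) ^ (α - 2)) :
    ∀ x ∈ epigraph Ψ, ∀ lam : ℝ, 0 < lam →
      |fderiv ℝ U (x + lam • eN n) l - fderiv ℝ U x l| ≤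
        (M / ((1 - α) * Real.cos (Real.arctan L) ^ (2 - α))) *
          (infDist x (frontier (epigraph Ψ)) ^ (α - 1) -
            (infDist x (frontier (epigraph Ψ)) + lam) ^ (α - 1)) :=
  stmt9_general L M α hα Ψ hΨ U hharm l hmix
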